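/- arXiv:2402.14490 — 3 statements merged into one kernel-verified Lean document; each statement's English description precedes it below -/
import Mathlib

section
/- The gradient of the LogSumExp smooth minimum J_LSE with respect to a centroid c_k equals -∑_n u_{kn}(x_n - c_k), where u_{kn} = e^{-λ d_{kn}}/∑_i e^{-λ d_{in}} and d_{kn} = ½‖x_n - c_k‖². -/
/-!
`J_LSE` is a sum over the data points of the LogSumExp smooth minimum of the `d_{in}`. By the
chain rule the gradient of a smooth minimum is the softmin-weighted average of the gradients of
its arguments, and among the `d_{in}` only `d_{kn}` depends on `c_k`, with gradient `c_k - x_n`.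
-/

open Finset Real

variable {F : Type*} [NormedAddCommGroup F] [InnerProductSpace ℝ F] [CompleteSpace F]

theorem HasDerivAt.comp_hasGradientAt {φ : ℝ → ℝ} {φ' : ℝ} {f : F → ℝ} {f' y : F}
    (hφ : HasDerivAt φ φ' (f y)) (hf : HasGradientAt f f' y) :
    HasGradientAt (fun z => φ (f z)) (φ' • f') y := by
  rw [hasGradientAt_iff_hasFDerivAt, map_smul]
  exact hφ.comp_hasFDerivAt y hf.hasFDerivAt

theorem HasGradientAt.fun_sum {ι : Type*} {u : Finset ι} {f : ι → F → ℝ} {f' : ι → F} {y : F}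
    (h : ∀ i ∈ u, HasGradientAt (f i) (f' i) y) :
    HasGradientAt (fun z => ∑ i ∈ u, f i z) (∑ i ∈ u, f' i) y := by
  rw [hasGradientAt_iff_hasFDerivAt, map_sum]
  exact HasFDerivAt.fun_sum fun i hi => (h i hi).hasFDerivAt

theorem hasGradientAt_norm_sub_sq_div_two (a y : F) :
    HasGradientAt (fun z => ‖a - z‖ ^ 2 / 2) (y - a) y := by
  rw [hasGradientAt_iff_hasFDerivAt]
  simp only [div_eq_mul_inv]
  refine (((hasFDerivAt_const a y).sub (hasFDerivAt_id y)).norm_sq.mul_const 2⁻¹).congr_fderiv ?_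
  ext v
  simp

theorem hasGradientAt_smoothMin {ι : Type*} [Fintype ι] [Nonempty ι] {lam : ℝ} (hlam : lam ≠ 0)
    {f : ι → F → ℝ} {f' : ι → F} {y : F} (hf : ∀ i, HasGradientAt (f i) (f' i) y) :
    HasGradientAt (fun z => -(1 / lam) * log (∑ i, exp (-lam * f i z)))
      (∑ i, (exp (-lam * f i y) / ∑ j, exp (-lam * f j y)) • f' i) y := by
  have hexp : ∀ i, HasGradientAt (fun z => exp (-lam * f i z))
      ((exp (-lam * f i y) * -lam) • f' i) y := fun i =>
    (((hasDerivAt_id _).const_mul (-lam)).exp.congr_deriv (by simp)).comp_hasGradientAt (hf i)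
  have hpos : 0 < ∑ j, exp (-lam * f j y) := sum_pos (fun j _ => exp_pos _) univ_nonempty
  have hlog := ((hasDerivAt_log hpos.ne').const_mul (-(1 / lam))).comp_hasGradientAt
    (f := fun z => ∑ i, exp (-lam * f i z)) (HasGradientAt.fun_sum fun i _ => hexp i)
  convert hlog using 1
  rw [smul_sum]
  refine sum_congr rfl fun i _ => ?_
  rw [smul_smul]
  congr 1
  field_simp

theorem hasGradientAt_norm_sub_update_sq_div_two {ι : Type*} [DecidableEq ι] (a : F) (c : ι → F)
    (k i : ι) :
    HasGradientAt (fun z => ‖a - Function.update c k z i‖ ^ 2 / 2)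
      (if i = k then c k - a else 0) (c k) := by
  by_cases hik : i = k
  · subst hik
    simpa using hasGradientAt_norm_sub_sq_div_two a (c i)
  · simpa [Function.update_of_ne hik, hik] using hasGradientAt_const (c k) (‖a - c i‖ ^ 2 / 2)

theorem grad_J_LSE_general {K N P : ℕ} (lam : ℝ) (hlam : 0 < lam)
    (x : Fin N → EuclideanSpace ℝ (Fin P)) (c : Fin K → EuclideanSpace ℝ (Fin P))
    (k : Fin K) :
    HasGradientAt
      (fun ck : EuclideanSpace ℝ (Fin P) =>
        ∑ n, -(1 / lam) *
          Real.log (∑ i, Real.exp (-lam * (‖x n - Function.update c k ck i‖ ^ 2 / 2))))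
      (-∑ n, (Real.exp (-lam * (‖x n - c k‖ ^ 2 / 2)) /
          ∑ i, Real.exp (-lam * (‖x n - c i‖ ^ 2 / 2))) • (x n - c k))
      (c k) := by
  have : Nonempty (Fin K) := ⟨k⟩
  have hterm := fun n => hasGradientAt_smoothMin hlam.ne' fun i =>
    hasGradientAt_norm_sub_update_sq_div_two (x n) c k i
  convert HasGradientAt.fun_sum fun n _ => hterm n using 1
  rw [← sum_neg_distrib]
  refine sum_congr rfl fun n _ => ?_
  simp only [Function.update_eq_self, smul_ite, smul_zero, sum_ite_eq', mem_univ, if_true]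
  rw [← smul_neg, neg_sub]

/-- The gradient of the LogSumExp smooth K-means objective `J_LSE` with respect to the
centroid `c k` equals `-∑ n, u k n • (x n - c k)`, where
`u k n = exp (-λ d k n) / ∑ i, exp (-λ d i n)` and `d k n = ½ ‖x n - c k‖²`. -/
theorem grad_J_LSE {K N P : ℕ} (hK : 0 < K) (lam : ℝ) (hlam : 0 < lam)
    (x : Fin N → EuclideanSpace ℝ (Fin P)) (c : Fin K → EuclideanSpace ℝ (Fin P))
    (k : Fin K) :
    HasGradientAt
      (fun ck : EuclideanSpace ℝ (Fin P) =>
        ∑ n, -(1 / lam) *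
          Real.log (∑ i, Real.exp (-lam * (‖x n - Function.update c k ck i‖ ^ 2 / 2))))
      (-∑ n, (Real.exp (-lam * (‖x n - c k‖ ^ 2 / 2)) /
          ∑ i, Real.exp (-lam * (‖x n - c i‖ ^ 2 / 2))) • (x n - c k))
      (c k) :=
  grad_J_LSE_general lam hlam x c k
end

section
/- One step of the smooth K-means update decreases the objective by at least half the squared gradient norm times the learning rate: if c_k^{(τ+1)} = c_k^{(τ)} - γ_k^{(τ)} ∂_{c_k}J(c^{(τ)}) with γ_k^{(τ)} = 1/∑_n (∂h/∂d_k)|_{n,τ} and all ∂h/∂d_k ≥ 0 with positive column sums, and h is concave, then J(c^{(τ)}) - J(c^{(τ+1)}) ≥ ∑_{k=1}^K (γ_k^{(τ)}/2)·‖∂_{c_k}J(c^{(τ)})‖². -/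
/-!
Each term of `J` is a concave function of the distances, so it lies below its tangent plane:
`J(c') - J(c)` is at most the linearization `∑ₖ ∑ₙ gₖₙ (d'ₖₙ - dₖₙ)`, with `gₖₙ = ∂h/∂dₖ` evaluated
at the old centres. For fixed `k` this is a weighted sum of changes of half squared distances,
and the step `c'ₖ = cₖ - γₖ ∂ₖJ` with `γₖ = (∑ₙ gₖₙ)⁻¹`, which moves `cₖ` to the `gₖ`-weighted
mean of the data, makes it exactly `-(γₖ/2) ‖∂ₖJ‖²`.
-/

open AffineMap in
theorem ConcaveOn.sub_le_fderiv_sub {E : Type*} [NormedAddCommGroup E] [NormedSpace ℝ E]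
    {s : Set E} {f : E → ℝ} {f' : E →L[ℝ] ℝ} (hf : ConcaveOn ℝ s f) {x y : E}
    (hx : x ∈ s) (hy : y ∈ s) (hfx : HasFDerivAt f f' x) :
    f y - f x ≤ f' (y - x) := by
  have hline : HasDerivAt (f ∘ lineMap (k := ℝ) x y) (f' (y - x)) 0 :=
    (by simpa using hfx : HasFDerivAt f f' (lineMap x y (0 : ℝ))).comp_hasDerivAt (0 : ℝ)
      hasDerivAt_lineMap
  simpa [slope_def_field] using
    (hf.comp_affineMap (lineMap x y)).slope_le_of_hasDerivAt (x := 0) (y := 1)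
      (by simpa using hx) (by simpa using hy) zero_lt_one hline

theorem ContinuousLinearMap.apply_eq_sum_mul_apply_single {ι : Type*} [Fintype ι]
    [DecidableEq ι] (L : (ι → ℝ) →L[ℝ] ℝ) (v : ι → ℝ) :
    L v = ∑ i, v i * L (Pi.single i 1) := by
  conv_lhs => rw [pi_eq_sum_univ' v]
  simp only [map_sum, map_smul, smul_eq_mul]

section WeightedDistances

variable {E ι : Type*} [NormedAddCommGroup E] [InnerProductSpace ℝ E]

theorem sum_mul_half_sq_dist_sub_sub (t : Finset ι) (w : ι → ℝ) (x : ι → E) (c v : E) :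
    ∑ n ∈ t, w n * (‖x n - (c - v)‖ ^ 2 / 2 - ‖x n - c‖ ^ 2 / 2) =
      inner ℝ (∑ n ∈ t, w n • (x n - c)) v + (∑ n ∈ t, w n) * (‖v‖ ^ 2 / 2) := by
  rw [sum_inner, Finset.sum_mul, ← Finset.sum_add_distrib]
  refine Finset.sum_congr rfl fun n _ => ?_
  rw [sub_sub_eq_add_sub, add_sub_right_comm, norm_add_sq_real, real_inner_smul_left]
  ring

theorem sum_mul_half_sq_dist_sub_gradient_step (t : Finset ι) (w : ι → ℝ) (x : ι → E)
    (c g : E) (hg : g = -∑ n ∈ t, w n • (x n - c)) :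
    ∑ n ∈ t, w n * (‖x n - (c - (∑ n ∈ t, w n)⁻¹ • g)‖ ^ 2 / 2 - ‖x n - c‖ ^ 2 / 2) =
      -((∑ n ∈ t, w n)⁻¹ / 2 * ‖g‖ ^ 2) := by
  set S := ∑ n ∈ t, w n
  rw [sum_mul_half_sq_dist_sub_sub, ← neg_neg (∑ n ∈ t, _), ← hg, inner_neg_left,
    real_inner_smul_right, real_inner_self_eq_norm_sq, norm_smul, Real.norm_eq_abs, mul_pow,
    sq_abs]
  rcases eq_or_ne S 0 with hS | hS
  · simp [hS]
  · field_simp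
    ring

end WeightedDistances

theorem skm_one_step_decrease_general {K N P : ℕ}
    (h : (Fin K → ℝ) → ℝ) (h' : (Fin K → ℝ) → ((Fin K → ℝ) →L[ℝ] ℝ))
    (hconc : ConcaveOn ℝ (Set.Ici 0) h)
    (hdiff : ∀ d ∈ Set.Ici (0 : Fin K → ℝ), HasFDerivAt h (h' d) d)
    (x : Fin N → EuclideanSpace ℝ (Fin P))
    (c c' : Fin K → EuclideanSpace ℝ (Fin P))
    (g : Fin K → Fin N → ℝ)
    (hg : ∀ k n, g k n = h' (fun i => ‖x n - c i‖ ^ 2 / 2) (Pi.single k 1))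
    (γ : Fin K → ℝ) (hγ : ∀ k, γ k = (∑ n, g k n)⁻¹)
    (grad : Fin K → EuclideanSpace ℝ (Fin P))
    (hgrad : ∀ k, grad k = -∑ n, g k n • (x n - c k))
    (hupdate : ∀ k, c' k = c k - γ k • grad k) :
    (∑ n, h (fun i => ‖x n - c i‖ ^ 2 / 2)) -
        (∑ n, h (fun i => ‖x n - c' i‖ ^ 2 / 2)) ≥
      ∑ k, (γ k / 2) * ‖grad k‖ ^ 2 := by
  have hdist_nonneg : ∀ (b : Fin K → EuclideanSpace ℝ (Fin P)) n,
      (fun i => ‖x n - b i‖ ^ 2 / 2) ∈ Set.Ici 0 := fun b n i => by positivity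
  have htangent : ∀ n, h (fun i => ‖x n - c' i‖ ^ 2 / 2) - h (fun i => ‖x n - c i‖ ^ 2 / 2) ≤
      ∑ k, g k n * (‖x n - c' k‖ ^ 2 / 2 - ‖x n - c k‖ ^ 2 / 2) := fun n =>
    (hconc.sub_le_fderiv_sub (hdist_nonneg c n) (hdist_nonneg c' n)
      (hdiff _ (hdist_nonneg c n))).trans_eq <| by
        simp only [ContinuousLinearMap.apply_eq_sum_mul_apply_single _ (_ - _), hg, Pi.sub_apply,
          mul_comm]
  have hstep : ∀ k, ∑ n, g k n * (‖x n - c' k‖ ^ 2 / 2 - ‖x n - c k‖ ^ 2 / 2) =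
      -((γ k / 2) * ‖grad k‖ ^ 2) := fun k => by
    rw [hupdate, hγ]
    exact sum_mul_half_sq_dist_sub_gradient_step _ _ _ _ _ (hgrad k)
  calc ∑ k, (γ k / 2) * ‖grad k‖ ^ 2
      = -∑ k, ∑ n, g k n * (‖x n - c' k‖ ^ 2 / 2 - ‖x n - c k‖ ^ 2 / 2) := by
        simp only [hstep, Finset.sum_neg_distrib, neg_neg]
    _ = -∑ n, ∑ k, g k n * (‖x n - c' k‖ ^ 2 / 2 - ‖x n - c k‖ ^ 2 / 2) := by
        rw [Finset.sum_comm]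
    _ ≤ -∑ n, (h (fun i => ‖x n - c' i‖ ^ 2 / 2) - h (fun i => ‖x n - c i‖ ^ 2 / 2)) :=
        neg_le_neg (Finset.sum_le_sum fun n _ => htangent n)
    _ = _ := by rw [Finset.sum_sub_distrib, neg_sub]

/-- One step of the smooth K-means update decreases the objective by at least half the
squared gradient norm times the learning rate. -/
theorem skm_one_step_decrease {K N P : ℕ}
    (h : (Fin K → ℝ) → ℝ) (h' : (Fin K → ℝ) → ((Fin K → ℝ) →L[ℝ] ℝ))
    (hconc : ConcaveOn ℝ (Set.Ici 0) h)
    (hdiff : ∀ d ∈ Set.Ici (0 : Fin K → ℝ), HasFDerivAt h (h' d) d)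
    (x : Fin N → EuclideanSpace ℝ (Fin P))
    (c c' : Fin K → EuclideanSpace ℝ (Fin P))
    (g : Fin K → Fin N → ℝ)
    (hg : ∀ k n, g k n = h' (fun i => ‖x n - c i‖ ^ 2 / 2) (Pi.single k 1))
    (hg0 : ∀ k n, 0 ≤ g k n)
    (hsum : ∀ k, 0 < ∑ n, g k n)
    (γ : Fin K → ℝ) (hγ : ∀ k, γ k = (∑ n, g k n)⁻¹)
    (grad : Fin K → EuclideanSpace ℝ (Fin P))
    (hgrad : ∀ k, grad k = -∑ n, g k n • (x n - c k))
    (hupdate : ∀ k, c' k = c k - γ k • grad k) :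
    (∑ n, h (fun i => ‖x n - c i‖ ^ 2 / 2)) -
        (∑ n, h (fun i => ‖x n - c' i‖ ^ 2 / 2)) ≥
      ∑ k, (γ k / 2) * ‖grad k‖ ^ 2 :=
  skm_one_step_decrease_general h h' hconc hdiff x c c' g hg γ hγ grad hgrad hupdate
end

section
/- Under the smooth K-means update with concave, lower-bounded h and learning rates bounded below by ε > 0, the sequence of objective values J^{(τ)} is non-increasing and the gradients converge to zero: lim_{τ→∞} ∂_{c_k}J(c^{(τ)}) = 0 for all k. -/
/-!
Since `h` is concave, its tangent plane at the current squared distances bounds it from above,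
so the decrease of the objective over one step is at least the first-order term. Because
`γ_k` is the inverse of the total weight of centre `k`, the step moves `c_k` to the weighted
mean of the data, and the first-order term equals `-(γ_k / 2) ‖∂_{c_k} J‖²`. Hence
`J` decreases by at least `(ε / 2) ∑_k ‖∂_{c_k} J‖²` per step; being bounded below, it converges,
so these decrements, and with them the gradients, tend to zero.
-/

open Filter Topology Finset

lemma ConcaveOn.le_add_of_hasFDerivAt {E : Type*} [NormedAddCommGroup E] [NormedSpace ℝ E]
    {f : E → ℝ} {f' : E →L[ℝ] ℝ} {s : Set E} {x y : E} (hf : ConcaveOn ℝ s f)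
    (hx : x ∈ s) (hy : y ∈ s) (hfx : HasFDerivAt f f' x) : f y ≤ f x + f' (y - x) := by
  let line : ℝ →ᵃ[ℝ] E := AffineMap.lineMap x y
  have hderiv : HasDerivAt (f ∘ line) (f' (y - x)) 0 :=
    (by simpa [line] using hfx : HasFDerivAt f f' (line 0)).comp_hasDerivAt 0
      AffineMap.hasDerivAt_lineMap
  have hslope := (hf.comp_affineMap line).slope_le_of_hasDerivAt
    (by simpa [line] using hx) (by simpa [line] using hy) one_pos hderiv
  simp only [slope, Function.comp_apply, line, AffineMap.lineMap_apply_zero,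
    AffineMap.lineMap_apply_one, vsub_eq_sub, sub_zero, inv_one, one_smul] at hslope
  linarith

lemma ContinuousLinearMap.apply_eq_sum_mul_single {κ : Type*} [Fintype κ] [DecidableEq κ]
    (L : (κ → ℝ) →L[ℝ] ℝ) (v : κ → ℝ) : L v = ∑ k, v k * L (Pi.single k 1) := by
  conv_lhs => rw [pi_eq_sum_univ' v, map_sum]
  simp only [map_smul, smul_eq_mul]

lemma sum_mul_half_sq_dist_sub_of_gradient_step {ι E : Type*} [NormedAddCommGroup E]
    [InnerProductSpace ℝ E] (s : Finset ι) (w : ι → ℝ) (x : ι → E) {c u : E} {γ : ℝ}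
    (hγ : γ * ∑ n ∈ s, w n = 1) (hu : u = -∑ n ∈ s, w n • (x n - c)) :
    ∑ n ∈ s, w n * (‖x n - (c - γ • u)‖ ^ 2 / 2 - ‖x n - c‖ ^ 2 / 2) = -(γ / 2) * ‖u‖ ^ 2 := by
  have hterm : ∀ n, ‖x n - (c - γ • u)‖ ^ 2 / 2 - ‖x n - c‖ ^ 2 / 2
      = γ * inner ℝ (x n - c) u + γ ^ 2 / 2 * ‖u‖ ^ 2 := fun n => by
    rw [show x n - (c - γ • u) = (x n - c) + γ • u by abel, norm_add_sq_real,
      real_inner_smul_right, norm_smul, mul_pow, Real.norm_eq_abs, sq_abs]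
    ring
  have hinner : ∑ n ∈ s, w n * inner ℝ (x n - c) u = -‖u‖ ^ 2 := by
    have hsum : ∑ n ∈ s, w n • (x n - c) = -u := by rw [hu, neg_neg]
    simp only [← real_inner_smul_left, ← sum_inner, hsum, inner_neg_left,
      real_inner_self_eq_norm_sq]
  calc ∑ n ∈ s, w n * (‖x n - (c - γ • u)‖ ^ 2 / 2 - ‖x n - c‖ ^ 2 / 2)
      = γ * ∑ n ∈ s, w n * inner ℝ (x n - c) u + γ / 2 * ‖u‖ ^ 2 * (γ * ∑ n ∈ s, w n) := by
        simp only [hterm, mul_sum, ← sum_add_distrib]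
        exact sum_congr rfl fun n _ => by ring
    _ = -(γ / 2) * ‖u‖ ^ 2 := by rw [hinner, hγ]; ring

lemma tendsto_zero_of_add_mul_le_of_bddBelow {J a : ℕ → ℝ} {ε : ℝ} (hε : 0 < ε)
    (hJ : BddBelow (Set.range J)) (ha : ∀ τ, 0 ≤ a τ) (hdesc : ∀ τ, J (τ + 1) + ε * a τ ≤ J τ) :
    Tendsto a atTop (𝓝 0) := by
  have hanti : Antitone J :=
    antitone_nat_of_succ_le fun τ => by linarith [hdesc τ, mul_nonneg hε.le (ha τ)]
  have hJlim := tendsto_atTop_ciInf hanti hJ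
  have hdiff : Tendsto (fun τ => (J τ - J (τ + 1)) / ε) atTop (𝓝 0) := by
    simpa using (hJlim.sub (hJlim.comp (tendsto_add_atTop_nat 1))).div_const ε
  refine squeeze_zero ha (fun τ => ?_) hdiff
  rw [le_div_iff₀ hε]
  linarith [hdesc τ]

noncomputable section KMeans

variable {ι κ E : Type*} [NormedAddCommGroup E]

/-- The vector `(d_{1n}, …, d_{Kn})` of the paper. -/
def halfSqDist (x : ι → E) (c : κ → E) (n : ι) : κ → ℝ := fun k => ‖x n - c k‖ ^ 2 / 2

def objective [Fintype ι] (h : (κ → ℝ) → ℝ) (x : ι → E) (c : κ → E) : ℝ :=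
  ∑ n, h (halfSqDist x c n)

lemma halfSqDist_mem_Ici (x : ι → E) (c : κ → E) (n : ι) : halfSqDist x c n ∈ Set.Ici 0 :=
  fun k => by simp only [halfSqDist, Pi.zero_apply]; positivity

lemma objective_add_le_of_gradient_step [Fintype ι] [Fintype κ] [DecidableEq κ]
    [InnerProductSpace ℝ E] {h : (κ → ℝ) → ℝ}
    {h' : (κ → ℝ) → ((κ → ℝ) →L[ℝ] ℝ)} (hconc : ConcaveOn ℝ (Set.Ici 0) h)
    (hdiff : ∀ d ∈ Set.Ici (0 : κ → ℝ), HasFDerivAt h (h' d) d) (x : ι → E) {c c' : κ → E}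
    {g : κ → ι → ℝ} (hg : ∀ k n, g k n = h' (halfSqDist x c n) (Pi.single k 1))
    {γ : κ → ℝ} (hγ : ∀ k, γ k = (∑ n, g k n)⁻¹) {ε : ℝ} (hε : 0 < ε) (hγε : ∀ k, ε ≤ γ k)
    {grad : κ → E} (hgrad : ∀ k, grad k = -∑ n, g k n • (x n - c k))
    (hc' : ∀ k, c' k = c k - γ k • grad k) :
    objective h x c' + ε / 2 * ∑ k, ‖grad k‖ ^ 2 ≤ objective h x c := by
  have hγ_mul : ∀ k, γ k * ∑ n, g k n = 1 := fun k => by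
    have hγ_ne : γ k ≠ 0 := (hε.trans_le (hγε k)).ne'
    rw [hγ] at hγ_ne ⊢
    exact inv_mul_cancel₀ (by simpa using hγ_ne)
  have htangent : ∀ n, h (halfSqDist x c' n) ≤ h (halfSqDist x c n)
      + ∑ k, g k n * (halfSqDist x c' n k - halfSqDist x c n k) := fun n => by
    have := hconc.le_add_of_hasFDerivAt (halfSqDist_mem_Ici x c n) (halfSqDist_mem_Ici x c' n)
      (hdiff _ (halfSqDist_mem_Ici x c n))
    simpa only [ContinuousLinearMap.apply_eq_sum_mul_single _ (_ - _), Pi.sub_apply, ← hg,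
      mul_comm] using this
  have hstep : ∀ k, ∑ n, g k n * (halfSqDist x c' n k - halfSqDist x c n k)
      = -(γ k / 2) * ‖grad k‖ ^ 2 := fun k => by
    simp only [halfSqDist, hc']
    exact sum_mul_half_sq_dist_sub_of_gradient_step _ _ _ (hγ_mul k) (hgrad k)
  calc objective h x c' + ε / 2 * ∑ k, ‖grad k‖ ^ 2
      ≤ ∑ n, (h (halfSqDist x c n) + ∑ k, g k n * (halfSqDist x c' n k - halfSqDist x c n k))
        + ε / 2 * ∑ k, ‖grad k‖ ^ 2 :=
        add_le_add_left (sum_le_sum fun n _ => htangent n) _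
    _ = objective h x c + ∑ k, (ε - γ k) / 2 * ‖grad k‖ ^ 2 := by
        rw [sum_add_distrib, sum_comm, objective, mul_sum, add_assoc, ← sum_add_distrib]
        congr 1
        exact sum_congr rfl fun k _ => by rw [hstep]; ring
    _ ≤ objective h x c := by
        refine add_le_of_nonpos_right (sum_nonpos fun k _ => ?_)
        exact mul_nonpos_of_nonpos_of_nonneg (by linarith [hγε k]) (sq_nonneg _)

end KMeans

theorem skm_convergence_general {K N P : ℕ}
    (h : (Fin K → ℝ) → ℝ) (h' : (Fin K → ℝ) → ((Fin K → ℝ) →L[ℝ] ℝ))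
    (hconc : ConcaveOn ℝ (Set.Ici 0) h)
    (hdiff : ∀ d ∈ Set.Ici (0 : Fin K → ℝ), HasFDerivAt h (h' d) d)
    (hbelow : ∃ B : ℝ, ∀ d ∈ Set.Ici (0 : Fin K → ℝ), B ≤ h d)
    (x : Fin N → EuclideanSpace ℝ (Fin P))
    (c : ℕ → Fin K → EuclideanSpace ℝ (Fin P))
    (g : ℕ → Fin K → Fin N → ℝ)
    (hg : ∀ τ k n, g τ k n = h' (fun i => ‖x n - c τ i‖ ^ 2 / 2) (Pi.single k 1))
    (γ : ℕ → Fin K → ℝ) (hγ : ∀ τ k, γ τ k = (∑ n, g τ k n)⁻¹)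
    (ε : ℝ) (hε : 0 < ε) (hγε : ∀ τ k, ε ≤ γ τ k)
    (grad : ℕ → Fin K → EuclideanSpace ℝ (Fin P))
    (hgrad : ∀ τ k, grad τ k = -∑ n, g τ k n • (x n - c τ k))
    (hupdate : ∀ τ k, c (τ + 1) k = c τ k - γ τ k • grad τ k) :
    (∀ τ, (∑ n, h (fun i => ‖x n - c (τ + 1) i‖ ^ 2 / 2)) ≤
        ∑ n, h (fun i => ‖x n - c τ i‖ ^ 2 / 2)) ∧
    ∀ k, Filter.Tendsto (fun τ => grad τ k) Filter.atTop (nhds 0) := by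
  have hdesc τ := objective_add_le_of_gradient_step hconc hdiff x (hg τ) (hγ τ) hε (hγε τ)
    (hgrad τ) (hupdate τ)
  have hdesc_single τ k : objective h x (c (τ + 1)) + ε / 2 * ‖grad τ k‖ ^ 2
      ≤ objective h x (c τ) :=
    le_trans (by gcongr; exact single_le_sum (fun k _ => sq_nonneg ‖grad τ k‖) (mem_univ k))
      (hdesc τ)
  obtain ⟨B, hB⟩ := hbelow
  have hbdd : BddBelow (Set.range fun τ => objective h x (c τ)) := ⟨N * B, by
    rintro _ ⟨τ, rfl⟩
    simpa [objective] using sum_le_sum (s := univ) fun n _ => hB _ (halfSqDist_mem_Ici x (c τ) n)⟩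
  refine ⟨fun τ => le_of_add_le_of_nonneg_left (hdesc τ) (by positivity), fun k => ?_⟩
  have hsq : Tendsto (fun τ => ‖grad τ k‖ ^ 2) atTop (𝓝 0) :=
    tendsto_zero_of_add_mul_le_of_bddBelow (half_pos hε) hbdd (fun τ => sq_nonneg _)
      (fun τ => hdesc_single τ k)
  rw [tendsto_zero_iff_norm_tendsto_zero]
  simpa using hsq.sqrt

/-- Under the smooth K-means iteration with concave, lower-bounded `h` and learning rates
bounded below by `ε > 0`, the objective values are non-increasing and the gradients
converge to zero. -/
theorem skm_convergence {K N P : ℕ}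
    (h : (Fin K → ℝ) → ℝ) (h' : (Fin K → ℝ) → ((Fin K → ℝ) →L[ℝ] ℝ))
    (hconc : ConcaveOn ℝ (Set.Ici 0) h)
    (hdiff : ∀ d ∈ Set.Ici (0 : Fin K → ℝ), HasFDerivAt h (h' d) d)
    (hbelow : ∃ B : ℝ, ∀ d ∈ Set.Ici (0 : Fin K → ℝ), B ≤ h d)
    (x : Fin N → EuclideanSpace ℝ (Fin P))
    (c : ℕ → Fin K → EuclideanSpace ℝ (Fin P))
    (g : ℕ → Fin K → Fin N → ℝ)
    (hg : ∀ τ k n, g τ k n = h' (fun i => ‖x n - c τ i‖ ^ 2 / 2) (Pi.single k 1))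
    (hg0 : ∀ τ k n, 0 ≤ g τ k n)
    (γ : ℕ → Fin K → ℝ) (hγ : ∀ τ k, γ τ k = (∑ n, g τ k n)⁻¹)
    (ε : ℝ) (hε : 0 < ε) (hγε : ∀ τ k, ε ≤ γ τ k)
    (grad : ℕ → Fin K → EuclideanSpace ℝ (Fin P))
    (hgrad : ∀ τ k, grad τ k = -∑ n, g τ k n • (x n - c τ k))
    (hupdate : ∀ τ k, c (τ + 1) k = c τ k - γ τ k • grad τ k) :
    (∀ τ, (∑ n, h (fun i => ‖x n - c (τ + 1) i‖ ^ 2 / 2)) ≤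
        ∑ n, h (fun i => ‖x n - c τ i‖ ^ 2 / 2)) ∧
    ∀ k, Filter.Tendsto (fun τ => grad τ k) Filter.atTop (nhds 0) :=
  skm_convergence_general h h' hconc hdiff hbelow x c g hg γ hγ ε hε hγε grad hgrad hupdate
end
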